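/- Let n ≥ 1 and let v : Finset (Fin n) → ℝ be a payoff function. For a permutation σ of Fin n and i ∈ Fin n, let Ξ_i^σ denote the set of elements preceding i in the ordering σ, and let P be the prior P T = (|T|)!·(n−|T|)!/(n+1)!. Then, averaging uniformly over all n! permutations σ: (a) γ_i[v;P] = (1/n!)·∑_σ ((|Ξ_i^σ|+1)/(n+1)) · (v(Ξ_i^σ ∪ {i}) − v(Ξ_i^σ)); (b) λ_i[v;P] = (1/n!)·∑_σ ((n−|Ξ_i^σ|)/(n+1)) · (v(Ξ_i^σ ∪ {i}) − v(Ξ_i^σ)); and (c) the unbiased Shapley value satisfies Ψ̃_i[v] = (4/n!)·∑_σ ((|Ξ_i^σ|+1)·(n−|Ξ_i^σ|)/((n+1)·(n+2))) · (v(Ξ_i^σ ∪ {i}) − v(Ξ_i^σ)). -/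

import Mathlib

open Finset

noncomputable section

/-- Expected marginal gain γ_i[v;P]. -/
def gainD (n : ℕ) (v P : Finset (Fin n) → ℝ) (i : Fin n) : ℝ :=
  ∑ T ∈ univ.filter (fun T : Finset (Fin n) => i ∈ T), P T * (v T - v (T.erase i))

/-- Expected marginal loss λ_i[v;P]. -/
def lossD (n : ℕ) (v P : Finset (Fin n) → ℝ) (i : Fin n) : ℝ :=
  ∑ T ∈ univ.filter (fun T : Finset (Fin n) => i ∉ T), P T * (v (insert i T) - v T)

/-- The D-value ψ_i[v;P]. -/
def dVal (n : ℕ) (v P : Finset (Fin n) → ℝ) (i : Fin n) : ℝ :=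
  gainD n v P i + lossD n v P i
/-- The set Ξ_i^σ of players preceding i in the ordering σ. -/
def xiSet (n : ℕ) (σ : Equiv.Perm (Fin n)) (i : Fin n) : Finset (Fin n) :=
  univ.filter (fun j => σ.symm j < σ.symm i)

/-- The unbiased Shapley value Ψ̃_i[v]. -/
def ushapley (n : ℕ) (v : Finset (Fin n) → ℝ) (i : Fin n) : ℝ :=
  4 * ∑ T ∈ univ.filter (fun T : Finset (Fin n) => i ∈ T),
    ((Nat.factorial T.card * Nat.factorial (n - T.card + 1) : ℝ)
        / (Nat.factorial (n + 2) : ℝ)) * (v T - v (T.erase i))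

/-! Group the orderings σ by the set S = Ξ_i^σ of predecessors of i. The orderings with Ξ_i^σ = S
are those putting S first, then i, then the rest, i.e. the permutations carrying the labelling of
positions into (< |S|, = |S|, > |S|) to the labelling of players into (S, {i}, rest); there are
|S|! (n - 1 - |S|)! of them. Each average over σ thus becomes a sum over the sets S ∌ i, and the
three identities reduce, set by set, to identities between factorials. -/

open Equiv

theorem Equiv.Perm.card_comp_eq_of_card_fiber_eq {α ι : Type*} [Fintype α] [DecidableEq α]
    [Fintype ι] [DecidableEq ι] {f g : α → ι}
    (h : ∀ c, Fintype.card {a // f a = c} = Fintype.card {a // g a = c}) :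
    Fintype.card {σ : Perm α // f ∘ σ = g} = ∏ c, (Fintype.card {a // f a = c}).factorial := by
  let σ₀ : Perm α := ofFiberEquiv fun c => Fintype.equivOfCardEq (h c).symm
  have hσ₀ : f ∘ σ₀ = g := funext (ofFiberEquiv_map _)
  -- right multiplication by σ₀⁻¹ carries the solutions of f ∘ σ = g onto the stabiliser of f
  rw [← DomMulAct.stabilizer_card f]
  refine Fintype.card_congr (subtypeEquiv (Equiv.mulRight σ₀⁻¹) fun σ => ?_)
  rw [Equiv.coe_mulRight, Perm.coe_mul, ← Function.comp_assoc, ← hσ₀,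
    Perm.coe_inv, Equiv.comp_symm_eq]

section SplitLabel

variable {α : Type*} [DecidableEq α] {S : Finset α} {i j : α}

def splitLabel (S : Finset α) (i j : α) : Fin 3 :=
  if j ∈ S then 0 else if j = i then 1 else 2

theorem splitLabel_eq_zero_iff : splitLabel S i j = 0 ↔ j ∈ S := by
  unfold splitLabel; split_ifs <;> simp_all

theorem splitLabel_eq_one_iff (hi : i ∉ S) : splitLabel S i j = 1 ↔ j = i := by
  unfold splitLabel; split_ifs <;> grind

theorem card_splitLabel_fiber [Fintype α] (hi : i ∉ S) (c : Fin 3) :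
    Fintype.card {j // splitLabel S i j = c} = ![#S, 1, Fintype.card α - (#S + 1)] c := by
  rw [Fintype.card_subtype]
  fin_cases c
  · simp [splitLabel_eq_zero_iff]
  · simp [splitLabel_eq_one_iff hi, filter_eq']
  · have : univ.filter (fun j => splitLabel S i j = 2) = (insert i S)ᶜ := by
      ext j
      simp only [mem_filter, mem_univ, true_and]
      unfold splitLabel
      split_ifs <;> simp_all
    simp only [Fin.reduceFinMk, this]
    rw [card_compl, card_insert_of_notMem hi]
    rfl

end SplitLabel

theorem card_lt_of_notMem {n : ℕ} {i : Fin n} {S : Finset (Fin n)} (hi : i ∉ S) : #S < n := by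
  simpa using card_lt_univ_of_notMem hi

theorem card_filter_symm_lt {n : ℕ} (σ : Perm (Fin n)) (c : Fin n) :
    #(univ.filter fun j => σ.symm j < c) = c := by
  rw [card_equiv σ.symm (t := Iio c) (by simp), Fin.card_Iio]

theorem xiSet_eq_iff {n : ℕ} {σ : Perm (Fin n)} {i : Fin n} {S : Finset (Fin n)} (hi : i ∉ S)
    {k : Fin n} (hk : (k : ℕ) = #S) :
    xiSet n σ i = S ↔ splitLabel (Iio k) k ∘ σ.symm = splitLabel S i := by
  constructor
  · rintro rfl
    have hσi : σ.symm i = k := Fin.ext (by rw [hk, xiSet, card_filter_symm_lt])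
    funext j
    have hmem : j ∈ xiSet n σ i ↔ σ.symm j ∈ Iio k := by simp [xiSet, hσi]
    have heq : j = i ↔ σ.symm j = k := by rw [← hσi, σ.symm.injective.eq_iff]
    simp only [Function.comp_apply, splitLabel, hmem, heq]
  · intro hσ
    have hσi : σ.symm i = k := by
      have := congrFun hσ i
      rwa [Function.comp_apply, (splitLabel_eq_one_iff hi).mpr rfl,
        splitLabel_eq_one_iff notMem_Iio_self] at this
    ext j
    simpa [xiSet, hσi, splitLabel_eq_zero_iff] using congrArg (· = 0) (congrFun hσ j)

theorem card_filter_xiSet_eq {n : ℕ} {i : Fin n} {S : Finset (Fin n)} (hi : i ∉ S) :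
    #(univ.filter fun σ : Perm (Fin n) => xiSet n σ i = S)
      = (#S).factorial * (n - (#S + 1)).factorial := by
  set k : Fin n := ⟨#S, card_lt_of_notMem hi⟩
  have hfib (c : Fin 3) : Fintype.card {j // splitLabel (Iio k) k j = c}
      = Fintype.card {j // splitLabel S i j = c} := by
    rw [card_splitLabel_fiber notMem_Iio_self, card_splitLabel_fiber hi, Fin.card_Iio]
  rw [← Fintype.card_subtype, Fintype.card_congr (α := {σ : Perm (Fin n) // xiSet n σ i = S})
      (β := {τ : Perm (Fin n) // splitLabel (Iio k) k ∘ τ = splitLabel S i})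
      (subtypeEquiv (Equiv.inv _) fun σ => ?_),
    Perm.card_comp_eq_of_card_fiber_eq hfib, Fin.prod_univ_three]
  · simp [card_splitLabel_fiber notMem_Iio_self, k]
  · rw [xiSet_eq_iff hi (k := k) rfl]; rfl

theorem sum_perm_xiSet {M : Type*} [AddCommMonoid M] {n : ℕ} (i : Fin n)
    (F : Finset (Fin n) → M) :
    ∑ σ : Perm (Fin n), F (xiSet n σ i)
      = ∑ S ∈ univ.filter (i ∉ ·), ((#S).factorial * (n - (#S + 1)).factorial) • F S := by
  rw [← sum_fiberwise_of_maps_to' (t := univ.filter (i ∉ ·)) (g := fun σ => xiSet n σ i)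
    fun σ _ => by simp [xiSet]]
  refine sum_congr rfl fun S hS => ?_
  rw [sum_const, card_filter_xiSet_eq (mem_filter.1 hS).2]

theorem sum_filter_mem_eq_sum_filter_notMem_insert {α M : Type*} [Fintype α] [DecidableEq α]
    [AddCommMonoid M] (i : α) (G : Finset α → M) :
    ∑ T ∈ univ.filter (i ∈ ·), G T = ∑ S ∈ univ.filter (i ∉ ·), G (insert i S) :=
  sum_nbij' (fun T => T.erase i) (insert i) (by simp) (by simp)
    (fun T hT => insert_erase (mem_filter.1 hT).2) (fun S hS => erase_insert (mem_filter.1 hS).2)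
    (fun T hT => by rw [insert_erase (mem_filter.1 hT).2])

theorem cast_factorial_sub_eq {n k : ℕ} (hk : k < n) :
    ((n - k).factorial : ℝ) = ((n : ℝ) - k) * (n - (k + 1)).factorial := by
  rw [show n - k = n - (k + 1) + 1 by omega, Nat.factorial_succ, Nat.cast_mul,
    Nat.cast_add_one, Nat.cast_sub hk, Nat.cast_add_one]
  ring

section

variable {n : ℕ} (v : Finset (Fin n) → ℝ) (i : Fin n)

theorem gainD_eq_sum_perm {P : Finset (Fin n) → ℝ}
    (hP : ∀ T, P T = (#T).factorial * (n - #T).factorial / ((n + 1).factorial : ℝ)) :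
    gainD n v P i = 1 / n.factorial * ∑ σ : Perm (Fin n),
      ((#(xiSet n σ i) + 1 : ℝ) / (n + 1)) * (v (insert i (xiSet n σ i)) - v (xiSet n σ i)) := by
  rw [gainD, sum_filter_mem_eq_sum_filter_notMem_insert,
    sum_perm_xiSet i fun S => (#S + 1 : ℝ) / (n + 1) * (v (insert i S) - v S), mul_sum]
  refine sum_congr rfl fun S hS => ?_
  have hiS := (mem_filter.1 hS).2
  rw [erase_insert hiS, hP, card_insert_of_notMem hiS, nsmul_eq_mul, Nat.factorial_succ,
    Nat.factorial_succ]
  push_cast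
  field_simp

theorem lossD_eq_sum_perm {P : Finset (Fin n) → ℝ}
    (hP : ∀ T, P T = (#T).factorial * (n - #T).factorial / ((n + 1).factorial : ℝ)) :
    lossD n v P i = 1 / n.factorial * ∑ σ : Perm (Fin n),
      (((n : ℝ) - #(xiSet n σ i)) / (n + 1)) * (v (insert i (xiSet n σ i)) - v (xiSet n σ i)) := by
  rw [lossD, sum_perm_xiSet i fun S => ((n : ℝ) - #S) / (n + 1) * (v (insert i S) - v S),
    mul_sum]
  refine sum_congr rfl fun S hS => ?_
  have hiS := (mem_filter.1 hS).2
  rw [hP, nsmul_eq_mul, cast_factorial_sub_eq (card_lt_of_notMem hiS),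
    Nat.factorial_succ]
  push_cast
  field_simp

theorem ushapley_eq_sum_perm :
    ushapley n v i = 4 / n.factorial * ∑ σ : Perm (Fin n),
      (((#(xiSet n σ i) + 1 : ℝ) * ((n : ℝ) - #(xiSet n σ i))) / ((n + 1) * (n + 2)))
        * (v (insert i (xiSet n σ i)) - v (xiSet n σ i)) := by
  rw [ushapley, sum_filter_mem_eq_sum_filter_notMem_insert, sum_perm_xiSet i fun S =>
    (#S + 1 : ℝ) * ((n : ℝ) - #S) / ((n + 1) * (n + 2)) * (v (insert i S) - v S), mul_sum,
    mul_sum]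
  refine sum_congr rfl fun S hS => ?_
  have hiS := (mem_filter.1 hS).2
  have hk : #S < n := card_lt_of_notMem hiS
  rw [erase_insert hiS, card_insert_of_notMem hiS, show n - (#S + 1) + 1 = n - #S by omega,
    nsmul_eq_mul, cast_factorial_sub_eq hk, Nat.factorial_succ (n + 1), Nat.factorial_succ n,
    Nat.factorial_succ #S]
  push_cast
  field_simp
  ring

end

theorem stmt_19_general (n : ℕ) (P : Finset (Fin n) → ℝ)
    (hP : ∀ T : Finset (Fin n),
      P T = (Nat.factorial T.card * Nat.factorial (n - T.card) : ℝ)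
              / (Nat.factorial (n + 1) : ℝ))
    (v : Finset (Fin n) → ℝ) (i : Fin n) :
    (gainD n v P i
      = (1 / (Nat.factorial n : ℝ)) * ∑ σ : Equiv.Perm (Fin n),
          (((xiSet n σ i).card + 1 : ℝ) / ((n : ℝ) + 1))
            * (v (insert i (xiSet n σ i)) - v (xiSet n σ i))) ∧
    (lossD n v P i
      = (1 / (Nat.factorial n : ℝ)) * ∑ σ : Equiv.Perm (Fin n),
          (((n : ℝ) - (xiSet n σ i).card) / ((n : ℝ) + 1))
            * (v (insert i (xiSet n σ i)) - v (xiSet n σ i))) ∧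
    (ushapley n v i
      = (4 / (Nat.factorial n : ℝ)) * ∑ σ : Equiv.Perm (Fin n),
          ((((xiSet n σ i).card + 1 : ℝ) * ((n : ℝ) - (xiSet n σ i).card))
              / (((n : ℝ) + 1) * ((n : ℝ) + 2)))
            * (v (insert i (xiSet n σ i)) - v (xiSet n σ i))) :=
  ⟨gainD_eq_sum_perm v i hP, lossD_eq_sum_perm v i hP, ushapley_eq_sum_perm v i⟩

theorem stmt_19 (n : ℕ) (hn : 1 ≤ n) (P : Finset (Fin n) → ℝ)
    (hP : ∀ T : Finset (Fin n),
      P T = (Nat.factorial T.card * Nat.factorial (n - T.card) : ℝ)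
              / (Nat.factorial (n + 1) : ℝ))
    (v : Finset (Fin n) → ℝ) (i : Fin n) :
    (gainD n v P i
      = (1 / (Nat.factorial n : ℝ)) * ∑ σ : Equiv.Perm (Fin n),
          (((xiSet n σ i).card + 1 : ℝ) / ((n : ℝ) + 1))
            * (v (insert i (xiSet n σ i)) - v (xiSet n σ i))) ∧
    (lossD n v P i
      = (1 / (Nat.factorial n : ℝ)) * ∑ σ : Equiv.Perm (Fin n),
          (((n : ℝ) - (xiSet n σ i).card) / ((n : ℝ) + 1))
            * (v (insert i (xiSet n σ i)) - v (xiSet n σ i))) ∧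
    (ushapley n v i
      = (4 / (Nat.factorial n : ℝ)) * ∑ σ : Equiv.Perm (Fin n),
          ((((xiSet n σ i).card + 1 : ℝ) * ((n : ℝ) - (xiSet n σ i).card))
              / (((n : ℝ) + 1) * ((n : ℝ) + 2)))
            * (v (insert i (xiSet n σ i)) - v (xiSet n σ i))) :=
  stmt_19_general n P hP v i
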